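/- arXiv:2603.26391 — 2 statements merged into one kernel-verified Lean document; each statement's English description precedes it below -/
import Mathlib

section
/- Let a > 0 be a real number with a < 1. For any positive integers m1, m2 with gcd(m1, m2) = 1 and any integer b with b > 2*m2, the sum over all pairs of positive integers (k, l) with m1*k + m2*l = n of a^(2*m1*k + b*l), after dividing by a^(2n), has as n → ∞ along multiples of m1 a well-defined limit; averaged over residues e = 0,...,m1-1 of n mod m1, the mean value equals (1/m1) * a^(b - 2*m2) / (1 - a^(b - 2*m2)) up to the stated normalization. -/
/-! With `q = a ^ (b - 2 * m2) ∈ (0, 1)`, the term of a solution `(k, l)` of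
`m1 * k + m2 * l = n`, divided by `a ^ (2 * n)`, is `q ^ l`. Along `n ≡ c (mod m1)` the second
coordinates of the solutions are eventually exactly the `l ≥ 1` with `m2 * l ≡ c (mod m1)`, so by
dominated convergence the limit is the sum of `q ^ l` over that residue class. Every `l ≥ 1` lies in
exactly one of these classes, so the `m1` limits add up to `∑_{l ≥ 1} q ^ l = q / (1 - q)`. -/

/-- `h : ℕ → ℝ` has mean value `v` at infinity if, for some modulus `e > 0`, the
limit of `h` along each arithmetic progression `n ≡ c mod e` exists, and `v` is the
average of these limits. -/
def HasMeanValueAtInfinity (h : ℕ → ℝ) (v : ℝ) : Prop :=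
  ∃ e : ℕ, 0 < e ∧ ∃ d : ℕ → ℝ,
    (∀ c < e, Filter.Tendsto (fun k : ℕ => h (k * e + c)) Filter.atTop (nhds (d c))) ∧
    v = (1 / (e : ℝ)) * ∑ c ∈ Finset.range e, d c

open Filter Topology Finset

def positiveSolutions (m1 m2 n : ℕ) : Finset (ℕ × ℕ) :=
  (Icc 1 n ×ˢ Icc 1 n).filter fun p => m1 * p.1 + m2 * p.2 = n

section positiveSolutions

variable {m1 m2 : ℕ}

lemma injOn_snd_positiveSolutions (hm1 : 0 < m1) (n : ℕ) :
    Set.InjOn Prod.snd (positiveSolutions m1 m2 n : Set (ℕ × ℕ)) := by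
  rintro ⟨k, l⟩ hp ⟨k', l'⟩ hp' (rfl : l = l')
  simp only [positiveSolutions, coe_filter, Set.mem_ofPred_eq] at hp hp'
  have : m1 * k = m1 * k' := by omega
  simp [Nat.eq_of_mul_eq_mul_left hm1 this]

lemma sum_positiveSolutions_eq_tsum (hm1 : 0 < m1) (n : ℕ) (f : ℕ → ℝ) :
    ∑ p ∈ positiveSolutions m1 m2 n, f p.2 =
      ∑' l, Set.indicator ↑((positiveSolutions m1 m2 n).image Prod.snd) f l := by
  rw [← sum_eq_tsum_indicator, sum_image (injOn_snd_positiveSolutions hm1 n)]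

lemma eventually_mem_image_snd_positiveSolutions_iff (hm1 : 0 < m1) {c : ℕ} (hc : c < m1)
    (l : ℕ) :
    ∀ᶠ K in atTop, l ∈ (positiveSolutions m1 m2 (K * m1 + c)).image Prod.snd ↔
      l ∈ {l | 1 ≤ l ∧ m2 * l % m1 = c} := by
  filter_upwards [eventually_gt_atTop (m2 * l + l)] with K hK
  simp only [mem_image, positiveSolutions, mem_filter, mem_product, mem_Icc]
  constructor
  · rintro ⟨⟨k, l⟩, ⟨⟨-, hl, -⟩, he⟩, rfl⟩
    refine ⟨hl, ?_⟩
    have := congrArg (· % m1) he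
    simpa [Nat.mul_add_mod, Nat.mod_eq_of_lt hc, mul_comm] using this
  · rintro ⟨hl, hmod⟩
    obtain ⟨t, ht⟩ : ∃ t, m1 * t + c = m2 * l := ⟨m2 * l / m1, hmod ▸ Nat.div_add_mod _ _⟩
    have htK : t < K := by nlinarith
    have hK : K ≤ K * m1 := Nat.le_mul_of_pos_right K hm1
    refine ⟨(K - t, l), ⟨⟨⟨by omega, by omega⟩, hl, by omega⟩, ?_⟩, rfl⟩
    have : m1 * (K - t) + m1 * t = K * m1 := by rw [← mul_add, Nat.sub_add_cancel htK.le, mul_comm]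
    dsimp only
    omega

lemma tendsto_sum_positiveSolutions (hm1 : 0 < m1) {c : ℕ} (hc : c < m1) {f : ℕ → ℝ}
    (hf : Summable fun l => ‖f l‖) :
    Tendsto (fun K => ∑ p ∈ positiveSolutions m1 m2 (K * m1 + c), f p.2) atTop
      (𝓝 (∑' l, Set.indicator {l | 1 ≤ l ∧ m2 * l % m1 = c} f l)) := by
  simp only [sum_positiveSolutions_eq_tsum hm1]
  refine tendsto_tsum_of_dominated_convergence hf (fun l => ?_) (.of_forall fun K l => ?_)
  · refine tendsto_const_nhds.congr' ?_
    filter_upwards [eventually_mem_image_snd_positiveSolutions_iff hm1 hc l] with K hK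
    exact Set.indicator_eq_indicator hK.symm rfl
  · exact norm_indicator_le_norm_self f l

end positiveSolutions

lemma sum_range_tsum_indicator_mod {m1 : ℕ} (hm1 : 0 < m1) (m2 : ℕ) {f : ℕ → ℝ}
    (hf : Summable f) :
    ∑ c ∈ range m1, ∑' l, Set.indicator {l | 1 ≤ l ∧ m2 * l % m1 = c} f l =
      ∑' l, f (l + 1) := by
  have hfiber (l : ℕ) : ∑ c ∈ range m1, Set.indicator {l | 1 ≤ l ∧ m2 * l % m1 = c} f l =
      Set.indicator {l | 1 ≤ l} f l := by
    by_cases hl : 1 ≤ l <;> simp [Set.indicator_apply, hl, Nat.mod_lt _ hm1]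
  rw [← Summable.tsum_finsetSum fun c _ => hf.indicator _, tsum_congr hfiber,
    (hf.indicator _).tsum_eq_zero_add]
  simp

lemma zpow_div_eq_pow_of_add_eq {a : ℝ} (ha : a ≠ 0) (b : ℤ) {m1 m2 k l n : ℕ}
    (h : m1 * k + m2 * l = n) :
    a ^ ((2 * m1 * k : ℤ) + b * (l : ℤ)) / a ^ (2 * n) = (a ^ (b - 2 * (m2 : ℤ))) ^ l := by
  have hexp : (2 * m1 * k : ℤ) + b * l = (2 * n : ℕ) + (b - 2 * m2) * l := by
    rw [← h]; push_cast; ring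
  rw [hexp, zpow_add₀ ha, zpow_natCast, zpow_mul, zpow_natCast,
    mul_div_cancel_left₀ _ (pow_ne_zero _ ha)]

theorem stmt_6_general (a : ℝ) (ha0 : 0 < a) (ha1 : a < 1)
    (m1 m2 : ℕ) (hm1 : 0 < m1)
    (b : ℤ) (hb : 2 * (m2 : ℤ) < b) :
    HasMeanValueAtInfinity
      (fun n : ℕ =>
        (∑ p ∈ (Finset.Icc 1 n ×ˢ Finset.Icc 1 n).filter
            (fun p : ℕ × ℕ => m1 * p.1 + m2 * p.2 = n),
          a ^ ((2 * m1 * p.1 : ℤ) + b * (p.2 : ℤ))) / a ^ (2 * n))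
      ((1 / (m1 : ℝ)) * (a ^ (b - 2 * (m2 : ℤ)) / (1 - a ^ (b - 2 * (m2 : ℤ))))) := by
  set q := a ^ (b - 2 * (m2 : ℤ))
  have hq0 : 0 ≤ q := (zpow_pos ha0 _).le
  have hq1 : q < 1 := zpow_lt_one₀ ha0 ha1 (by omega)
  have hgeom : Summable fun l : ℕ => q ^ l := summable_geometric_of_lt_one hq0 hq1
  have hnormalize (n : ℕ) :
      (∑ p ∈ positiveSolutions m1 m2 n, a ^ ((2 * m1 * p.1 : ℤ) + b * (p.2 : ℤ))) / a ^ (2 * n) =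
        ∑ p ∈ positiveSolutions m1 m2 n, q ^ p.2 :=
    (sum_div ..).trans <| sum_congr rfl fun p hp =>
      zpow_div_eq_pow_of_add_eq ha0.ne' b (mem_filter.1 hp).2
  refine ⟨m1, hm1, fun c => ∑' l, Set.indicator {l | 1 ≤ l ∧ m2 * l % m1 = c} (q ^ ·) l,
    fun c hc => ?_, ?_⟩
  · refine (tendsto_sum_positiveSolutions hm1 hc ?_).congr fun K => (hnormalize _).symm
    simpa [abs_of_nonneg hq0] using hgeom
  · rw [sum_range_tsum_indicator_mod hm1 m2 hgeom]
    simp_rw [pow_succ]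
    rw [tsum_mul_right, tsum_geometric_of_lt_one hq0 hq1]
    ring

/-- For `0 < a < 1`, coprime positive integers `m1, m2` and an integer `b > 2*m2`,
the function `n ↦ (∑_{(k,l) ∈ ℤ_{>0}², m1 k + m2 l = n} a^(2 m1 k + b l)) / a^(2n)`
has mean value at infinity `(1/m1) * a^(b - 2 m2) / (1 - a^(b - 2 m2))`. -/
theorem stmt_6 (a : ℝ) (ha0 : 0 < a) (ha1 : a < 1)
    (m1 m2 : ℕ) (hm1 : 0 < m1) (hm2 : 0 < m2) (hcop : Nat.Coprime m1 m2)
    (b : ℤ) (hb : 2 * (m2 : ℤ) < b) :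
    HasMeanValueAtInfinity
      (fun n : ℕ =>
        (∑ p ∈ (Finset.Icc 1 n ×ˢ Finset.Icc 1 n).filter
            (fun p : ℕ × ℕ => m1 * p.1 + m2 * p.2 = n),
          a ^ ((2 * m1 * p.1 : ℤ) + b * (p.2 : ℤ))) / a ^ (2 * n))
      ((1 / (m1 : ℝ)) * (a ^ (b - 2 * (m2 : ℤ)) / (1 - a ^ (b - 2 * (m2 : ℤ))))) :=
  stmt_6_general a ha0 ha1 m1 m2 hm1 b hb
end

section
/- Let h : ℕ → ℝ be a function and suppose e > 0 and e' > 0 are integers such that all limits of h along arithmetic progressions mod e exist and all limits along arithmetic progressions mod e' exist. Then (1/e) * Σ_{c=0}^{e-1} lim_{n→∞, n ≡ c mod e} h(n) = (1/e') * Σ_{c=0}^{e'-1} lim_{n→∞, n ≡ c mod e'} h(n). -/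
/-
Every progression mod `e * e'` lies inside a progression mod `e` and inside one mod `e'`,
so the limit of `h` along `c` mod `e * e'` is both `d (c % e)` and `d' (c % e')`. Averaging
over the `e * e'` residues, each residue mod `e` is hit exactly `e'` times, which turns the
common average into `(1 / e) ∑ d c` on one side and `(1 / e') ∑ d' c` on the other.
-/

open Filter Finset

theorem tendsto_progression_mul_of_tendsto_progression {α : Type*} {h : ℕ → α} {l : Filter α}
    {e m c : ℕ} (hm : 0 < m) (hc : Tendsto (fun k ↦ h (k * e + c % e)) atTop l) :
    Tendsto (fun k ↦ h (k * (e * m) + c)) atTop l := by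
  have hindex : ∀ k, k * (e * m) + c = (k * m + c / e) * e + c % e := fun k ↦ by
    conv_lhs => rw [← Nat.div_add_mod c e]
    ring
  have hsub : Tendsto (fun k ↦ k * m + c / e) atTop atTop :=
    tendsto_atTop_mono (fun k ↦ le_add_right (Nat.le_mul_of_pos_right k hm)) tendsto_id
  simpa only [Function.comp_def, hindex] using hc.comp hsub

theorem sum_range_mul_comp_mod {M : Type*} [AddCommMonoid M] (f : ℕ → M) (e m : ℕ) :
    ∑ c ∈ range (m * e), f (c % e) = m • ∑ r ∈ range e, f r := by
  induction m with
  | zero => simp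
  | succ m ih =>
    rw [Nat.succ_mul, sum_range_add, ih, succ_nsmul]
    congr 1
    refine sum_congr rfl fun i hi ↦ ?_
    rw [Nat.mul_add_mod_of_lt (mem_range.mp hi)]

/-- The mean value at infinity is independent of the modulus: if `h : ℕ → ℝ` admits
limits along all arithmetic progressions mod `e` and mod `e'`, then the averages
of these limits agree. -/
theorem stmt_7 (h : ℕ → ℝ) (e e' : ℕ) (he : 0 < e) (he' : 0 < e')
    (d d' : ℕ → ℝ)
    (hd : ∀ c < e, Filter.Tendsto (fun k : ℕ => h (k * e + c)) Filter.atTop (nhds (d c)))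
    (hd' : ∀ c < e', Filter.Tendsto (fun k : ℕ => h (k * e' + c)) Filter.atTop (nhds (d' c))) :
    (1 / (e : ℝ)) * ∑ c ∈ Finset.range e, d c =
      (1 / (e' : ℝ)) * ∑ c ∈ Finset.range e', d' c := by
  have hlim : ∀ c, d (c % e) = d' (c % e') := fun c ↦ by
    refine tendsto_nhds_unique
      (tendsto_progression_mul_of_tendsto_progression he' (hd _ (c.mod_lt he))) ?_
    rw [mul_comm e e']
    exact tendsto_progression_mul_of_tendsto_progression he (hd' _ (c.mod_lt he'))
  have hsum : (e' : ℝ) * ∑ c ∈ range e, d c = e * ∑ c ∈ range e', d' c := by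
    rw [← nsmul_eq_mul, ← nsmul_eq_mul, ← sum_range_mul_comp_mod, ← sum_range_mul_comp_mod,
      mul_comm e' e]
    exact sum_congr rfl fun c _ ↦ hlim c
  field_simp
  linarith
end
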